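/- For α ∈ (1,2), ε ∈ (0, 2−α), k ≥ 2, and t > 0, the double integral ∫₀ᵗ ∫_{ℝᵈ\{0}} min(1, |z|^{(α+ε)/2} (t−s)^{-1/2})^k |z|^{-d-α} dz ds is bounded by t^{ε/(α+ε)} · ∫_{ℝᵈ\{0}} min(1, |z'|^{(α+ε)k/2}) |z'|^{-d-α} dz' · (α+ε)/ε, via the change of variable z = (t−s)^{1/(α+ε)} z'; in particular it is finite. -/

import Mathlib

/-!
Substituting `z = (t - s) ^ (1 / (α + ε)) • z'` in the inner integral turns
`‖z‖ ^ ((α + ε) / 2) * (t - s) ^ (-1 / 2)` into `‖z'‖ ^ ((α + ε) / 2)`, while the Lévy density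
`‖z‖ ^ (-d - α) dz` picks up the factor `(t - s) ^ (-α / (α + ε))`. So the inner integral is
`(t - s) ^ (-α / (α + ε))` times a fixed integral, which is finite because `min 1 (‖z'‖ ^ q)`
with `q = (α + ε) k / 2 > α` tames the singularity of `‖z'‖ ^ (-d - α)` at the origin; the
remaining time integral is `t ^ (ε / (α + ε)) (α + ε) / ε` since `α / (α + ε) < 1`.
-/

open MeasureTheory Set Module
open scoped ENNReal

lemma Real.min_one_rpow {x k : ℝ} (hx : 0 ≤ x) (hk : 0 ≤ k) :
    (min 1 x) ^ k = min 1 (x ^ k) := by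
  rcases le_total x 1 with h | h
  · rw [min_eq_right h, min_eq_right (Real.rpow_le_one hx h hk)]
  · rw [min_eq_left h, Real.one_rpow, min_eq_left (Real.one_le_rpow h hk)]

lemma integrableOn_Ioi_min_one_rpow_mul_rpow {α q : ℝ} (hα : 0 < α) (hq : α < q) :
    IntegrableOn (fun y : ℝ ↦ min 1 (y ^ q) * y ^ (-α - 1)) (Ioi 0) := by
  rw [← Ioc_union_Ioi_eq_Ioi zero_le_one, integrableOn_union]
  constructor
  · have hpow : IntegrableOn (fun y : ℝ ↦ y ^ (q - α - 1)) (Ioc 0 1) := by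
      rw [← intervalIntegrable_iff_integrableOn_Ioc_of_le zero_le_one]
      exact intervalIntegral.intervalIntegrable_rpow' (r := q - α - 1) (by linarith)
    refine hpow.congr_fun (fun y hy ↦ ?_) measurableSet_Ioc
    rw [min_eq_right (Real.rpow_le_one hy.1.le hy.2 (by linarith)), ← Real.rpow_add hy.1]
    ring_nf
  · refine (integrableOn_Ioi_rpow_of_lt (show -α - 1 < -1 by linarith) one_pos).congr_fun
      (fun y hy ↦ ?_) measurableSet_Ioi
    rw [min_eq_left (Real.one_le_rpow (le_of_lt hy) (by linarith)), one_mul]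

section HaarMeasure

variable {E : Type*} [NormedAddCommGroup E] [NormedSpace ℝ E] [FiniteDimensional ℝ E]
  [MeasurableSpace E] [BorelSpace E] (μ : Measure E) [μ.IsAddHaarMeasure]

lemma integrable_min_one_rpow_mul_rpow_neg_finrank [Nontrivial E] {α q : ℝ} (hα : 0 < α)
    (hq : α < q) :
    Integrable (fun z : E ↦ min 1 (‖z‖ ^ q) * ‖z‖ ^ (-(finrank ℝ E : ℝ) - α)) μ := by
  rw [integrable_fun_norm_addHaar μ (f := fun y ↦ min 1 (y ^ q) * y ^ (-(finrank ℝ E : ℝ) - α))]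
  refine (integrableOn_Ioi_min_one_rpow_mul_rpow hα hq).congr_fun (fun y (hy : 0 < y) ↦ ?_)
    measurableSet_Ioi
  rw [smul_eq_mul, ← Real.rpow_natCast, Nat.cast_sub finrank_pos, mul_left_comm,
    ← Real.rpow_add hy]
  ring_nf

lemma lintegral_comp_smul_addHaar {c : ℝ} (hc : 0 < c) {f : E → ℝ≥0∞} (hf : Measurable f) :
    ∫⁻ z, f (c • z) ∂μ = ENNReal.ofReal (c ^ finrank ℝ E)⁻¹ * ∫⁻ z, f z ∂μ := by
  rw [← lintegral_map hf (measurable_const_smul c), Measure.map_addHaar_smul μ hc.ne',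
    lintegral_smul_measure, abs_of_pos (by positivity), smul_eq_mul]

lemma lintegral_min_one_rpow_mul_rpow_neg_finrank_scaling {α β k u : ℝ} (hβ : 0 < β)
    (hk : 0 ≤ k) (hu : 0 < u) :
    ∫⁻ z, ENNReal.ofReal ((min 1 (‖z‖ ^ (β / 2) * u ^ (-(1:ℝ)/2))) ^ k
        * ‖z‖ ^ (-(finrank ℝ E : ℝ) - α)) ∂μ
      = ENNReal.ofReal (u ^ (-(α / β))) *
        ∫⁻ z, ENNReal.ofReal (min 1 (‖z‖ ^ (β * k / 2)) * ‖z‖ ^ (-(finrank ℝ E : ℝ) - α)) ∂μ := by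
  set n : ℝ := (finrank ℝ E : ℝ)
  set c : ℝ := u ^ β⁻¹
  have hc : 0 < c := by positivity
  have hcβ : c ^ (β / 2) * u ^ (-(1:ℝ)/2) = 1 := by
    rw [← Real.rpow_mul hu.le, ← Real.rpow_add hu,
      show β⁻¹ * (β / 2) + -1 / 2 = 0 by field_simp; ring, Real.rpow_zero]
  have hpoint : ∀ z : E,
      ENNReal.ofReal ((min 1 (‖c • z‖ ^ (β / 2) * u ^ (-(1:ℝ)/2))) ^ k * ‖c • z‖ ^ (-n - α))
        = ENNReal.ofReal (c ^ (-n - α)) *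
          ENNReal.ofReal (min 1 (‖z‖ ^ (β * k / 2)) * ‖z‖ ^ (-n - α)) := by
    intro z
    rw [norm_smul, Real.norm_of_nonneg hc.le, Real.mul_rpow hc.le (norm_nonneg z),
      Real.mul_rpow hc.le (norm_nonneg z), mul_right_comm, hcβ, one_mul,
      Real.min_one_rpow (by positivity) hk, ← Real.rpow_mul (norm_nonneg z),
      ← ENNReal.ofReal_mul (by positivity)]
    ring_nf
  have hmeas : Measurable fun z : E ↦
      ENNReal.ofReal ((min 1 (‖z‖ ^ (β / 2) * u ^ (-(1:ℝ)/2))) ^ k * ‖z‖ ^ (-n - α)) := by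
    fun_prop
  have hscale := lintegral_comp_smul_addHaar μ hc hmeas
  simp only [hpoint] at hscale
  rw [lintegral_const_mul' _ _ ENNReal.ofReal_ne_top] at hscale
  have hcN : (0:ℝ) < c ^ finrank ℝ E := by positivity
  have hexp : u ^ (-(α / β)) = c ^ finrank ℝ E * c ^ (-n - α) := by
    rw [← Real.rpow_natCast, ← Real.rpow_add hc, ← Real.rpow_mul hu.le]
    congr 1
    field_simp
    ring
  rw [hexp, ENNReal.ofReal_mul hcN.le, mul_assoc, hscale, ← mul_assoc,
    ← ENNReal.ofReal_mul hcN.le, mul_inv_cancel₀ hcN.ne', ENNReal.ofReal_one, one_mul]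

end HaarMeasure

lemma lintegral_Ioo_rpow_neg_sub {p t : ℝ} (hp : p < 1) (ht : 0 ≤ t) :
    ∫⁻ s in Ioo 0 t, ENNReal.ofReal ((t - s) ^ (-p)) = ENNReal.ofReal (t ^ (1 - p) / (1 - p)) := by
  have hint : IntervalIntegrable (fun s : ℝ ↦ (t - s) ^ (-p)) volume 0 t := by
    simpa using (intervalIntegral.intervalIntegrable_rpow' (r := -p) (a := 0) (b := t)
      (by linarith)).comp_sub_left t |>.symm
  rw [← ofReal_integral_eq_lintegral_ofReal
      ((intervalIntegrable_iff_integrableOn_Ioo_of_le ht).1 hint)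
      ((ae_restrict_iff' measurableSet_Ioo).2 (.of_forall fun s hs ↦
        Real.rpow_nonneg (sub_nonneg.2 hs.2.le) _)),
    ← integral_Ioc_eq_integral_Ioo, ← intervalIntegral.integral_of_le ht,
    intervalIntegral.integral_comp_sub_left (fun x : ℝ ↦ x ^ (-p)) t,
    integral_rpow (.inl (by linarith)), sub_zero, sub_self,
    Real.zero_rpow (by linarith), sub_zero, neg_add_eq_sub]

theorem stmt_13_general (d : ℕ) (hd : 1 ≤ d) (α ε k t : ℝ)
    (hα : 1 < α) (hε : 0 < ε)
    (hk : 2 ≤ k) (ht : 0 < t) :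
    (∫⁻ s in Ioo (0:ℝ) t, ∫⁻ z in {(0 : EuclideanSpace ℝ (Fin d))}ᶜ,
        ENNReal.ofReal
          ((min 1 (‖z‖ ^ ((α + ε) / 2) * (t - s) ^ (-(1:ℝ)/2))) ^ k
            * ‖z‖ ^ (-(d : ℝ) - α)))
      ≤ ENNReal.ofReal (t ^ (ε / (α + ε)) * ((α + ε) / ε))
        * ∫⁻ z' in {(0 : EuclideanSpace ℝ (Fin d))}ᶜ,
            ENNReal.ofReal (min 1 (‖z'‖ ^ ((α + ε) * k / 2)) * ‖z'‖ ^ (-(d : ℝ) - α)) ∧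
    (∫⁻ s in Ioo (0:ℝ) t, ∫⁻ z in {(0 : EuclideanSpace ℝ (Fin d))}ᶜ,
        ENNReal.ofReal
          ((min 1 (‖z‖ ^ ((α + ε) / 2) * (t - s) ^ (-(1:ℝ)/2))) ^ k
            * ‖z‖ ^ (-(d : ℝ) - α))) ≠ ∞ := by
  have : Nonempty (Fin d) := Fin.pos_iff_nonempty.1 hd
  have hαε : 0 < α + ε := by linarith
  have hfin := integrable_min_one_rpow_mul_rpow_neg_finrank
    (volume : Measure (EuclideanSpace ℝ (Fin d))) (α := α) (q := (α + ε) * k / 2) (by linarith)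
    (by nlinarith)
  have hscale := fun u ↦ lintegral_min_one_rpow_mul_rpow_neg_finrank_scaling
    (volume : Measure (EuclideanSpace ℝ (Fin d))) (α := α) (k := k) (u := u) hαε (by linarith)
  simp only [finrank_euclideanSpace_fin] at hfin hscale
  simp only [restrict_compl_singleton]
  set I := ∫⁻ z : EuclideanSpace ℝ (Fin d),
    ENNReal.ofReal (min 1 (‖z‖ ^ ((α + ε) * k / 2)) * ‖z‖ ^ (-(d : ℝ) - α))
  have hI : I ≠ ∞ := hfin.lintegral_lt_top.ne
  have hmain : ∫⁻ s in Ioo 0 t, ∫⁻ z : EuclideanSpace ℝ (Fin d),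
      ENNReal.ofReal ((min 1 (‖z‖ ^ ((α + ε) / 2) * (t - s) ^ (-(1:ℝ)/2))) ^ k
        * ‖z‖ ^ (-(d : ℝ) - α))
      = ENNReal.ofReal (t ^ (ε / (α + ε)) * ((α + ε) / ε)) * I := by
    rw [setLIntegral_congr_fun measurableSet_Ioo fun s hs ↦ hscale (t - s) (sub_pos.2 hs.2),
      lintegral_mul_const' _ _ hI, lintegral_Ioo_rpow_neg_sub ((div_lt_one hαε).2 (by linarith))
        ht.le]
    have hexp : 1 - α / (α + ε) = ε / (α + ε) := by field_simp; ring
    rw [hexp, div_div_eq_mul_div, mul_div_assoc]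
  exact ⟨hmain.le, hmain ▸ ENNReal.mul_ne_top ENNReal.ofReal_ne_top hI⟩

/-- For `α ∈ (1,2)`, `ε ∈ (0,2−α)`, `k ≥ 2`, `t > 0`, the double integral
`∫₀ᵗ ∫_{ℝᵈ\{0}} min(1, |z|^{(α+ε)/2}(t−s)^{-1/2})^k |z|^{-d-α} dz ds` is bounded by
`t^{ε/(α+ε)} (α+ε)/ε · ∫ min(1, |z'|^{(α+ε)k/2}) |z'|^{-d-α} dz'`, and in particular
it is finite. -/
theorem stmt_13 (d : ℕ) (hd : 1 ≤ d) (α ε k t : ℝ)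
    (hα : 1 < α) (hα2 : α < 2) (hε : 0 < ε) (hε2 : ε < 2 - α)
    (hk : 2 ≤ k) (ht : 0 < t) :
    (∫⁻ s in Ioo (0:ℝ) t, ∫⁻ z in {(0 : EuclideanSpace ℝ (Fin d))}ᶜ,
        ENNReal.ofReal
          ((min 1 (‖z‖ ^ ((α + ε) / 2) * (t - s) ^ (-(1:ℝ)/2))) ^ k
            * ‖z‖ ^ (-(d : ℝ) - α)))
      ≤ ENNReal.ofReal (t ^ (ε / (α + ε)) * ((α + ε) / ε))
        * ∫⁻ z' in {(0 : EuclideanSpace ℝ (Fin d))}ᶜ,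
            ENNReal.ofReal (min 1 (‖z'‖ ^ ((α + ε) * k / 2)) * ‖z'‖ ^ (-(d : ℝ) - α)) ∧
    (∫⁻ s in Ioo (0:ℝ) t, ∫⁻ z in {(0 : EuclideanSpace ℝ (Fin d))}ᶜ,
        ENNReal.ofReal
          ((min 1 (‖z‖ ^ ((α + ε) / 2) * (t - s) ^ (-(1:ℝ)/2))) ^ k
            * ‖z‖ ^ (-(d : ℝ) - α))) ≠ ∞ :=
  stmt_13_general d hd α ε k t hα hε hk ht
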